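/- arXiv:2007.00721 — 2 statements merged into one kernel-verified Lean document; each statement's English description precedes it below -/
import Mathlib

section
/- For every natural number m ≥ 0, SG(β_m) = t, where SG is the Sprague–Grundy function of the game i-Mark([1,t−1],{d}). -/
/-- The minimum excludant of a finite set of naturals. -/
noncomputable def mex (s : Finset ℕ) : ℕ := sInf {x : ℕ | x ∉ s}

/-- Sprague–Grundy function of the game i-Mark([1,t−1],{d}):
from a pile of `n` tokens one may subtract any `s` with `1 ≤ s ≤ t−1` and `s ≤ n`,
or replace a positive pile size `n` divisible by `d` by `n / d`. -/
noncomputable def sg (t d : ℕ) (hd : 2 ≤ d) (n : ℕ) : ℕ :=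
  mex ((Finset.Icc 1 (min (t - 1) n)).attach.image (fun s => sg t d hd (n - s.1)) ∪
       (if h : 0 < n ∧ d ∣ n then {sg t d hd (n / d)} else ∅))
termination_by n
decreasing_by
  · have hs := s.2
    simp only [Finset.mem_Icc] at hs
    omega
  · exact Nat.div_lt_self h.1 hd

/-- `α_m = d + d² + ⋯ + d^{m+1}`. -/
def alpha (d m : ℕ) : ℕ := ∑ i ∈ Finset.Icc 1 (m + 1), d ^ i

/-- `β_m = d + ⋯ + d^m + t·d^{m+1}`. -/
def beta (t d m : ℕ) : ℕ := (∑ i ∈ Finset.Icc 1 m, d ^ i) + t * d ^ (m + 1)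
/- ===================== auxiliary material ===================== -/

namespace IMark

noncomputable def opts (t d : ℕ) (hd : 2 ≤ d) (n : ℕ) : Finset ℕ :=
  (Finset.Icc 1 (min (t - 1) n)).attach.image (fun s => sg t d hd (n - s.1)) ∪
       (if h : 0 < n ∧ d ∣ n then {sg t d hd (n / d)} else ∅)

lemma sg_eq (t d : ℕ) (hd : 2 ≤ d) (n : ℕ) : sg t d hd n = mex (opts t d hd n) := by
  rw [sg]; rfl

lemma mem_opts (t d : ℕ) (hd : 2 ≤ d) (n v : ℕ) :
    v ∈ opts t d hd n ↔
      (∃ s, 1 ≤ s ∧ s ≤ t - 1 ∧ s ≤ n ∧ v = sg t d hd (n - s)) ∨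
      (0 < n ∧ d ∣ n ∧ v = sg t d hd (n / d)) := by
  unfold opts
  rw [Finset.mem_union, Finset.mem_image]
  constructor
  · rintro (⟨s, _, rfl⟩ | h)
    · have hs := s.2
      simp only [Finset.mem_Icc, le_min_iff] at hs
      exact Or.inl ⟨s.1, hs.1, hs.2.1, hs.2.2, rfl⟩
    · split_ifs at h with hc
      · simp only [Finset.mem_singleton] at h
        exact Or.inr ⟨hc.1, hc.2, h⟩
      · simp at h
  · rintro (⟨s, h1, h2, h3, rfl⟩ | ⟨h1, h2, rfl⟩)
    · exact Or.inl ⟨⟨s, by simp [Finset.mem_Icc]; omega⟩, Finset.mem_attach _ _, rfl⟩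
    · right; rw [dif_pos ⟨h1, h2⟩]; simp

lemma mex_eq_of (S : Finset ℕ) (v : ℕ) (hmem : ∀ w, w < v → w ∈ S) (hv : v ∉ S) :
    mex S = v := by
  unfold mex
  refine le_antisymm (Nat.sInf_le hv) ?_
  by_contra h
  push_neg at h
  have hne : {x : ℕ | x ∉ S}.Nonempty := ⟨v, hv⟩
  have := Nat.sInf_mem hne
  exact this (hmem _ h)

lemma sg_eq_of {t d : ℕ} {hd : 2 ≤ d} {n v : ℕ}
    (hmem : ∀ w, w < v → w ∈ opts t d hd n) (hv : v ∉ opts t d hd n) :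
    sg t d hd n = v := by
  rw [sg_eq]; exact mex_eq_of _ _ hmem hv

lemma opt_sub {t d : ℕ} {hd : 2 ≤ d} {n v s : ℕ} (h1 : 1 ≤ s) (h2 : s ≤ t - 1)
    (h3 : s ≤ n) (h4 : sg t d hd (n - s) = v) : v ∈ opts t d hd n :=
  (mem_opts t d hd n v).mpr (Or.inl ⟨s, h1, h2, h3, h4.symm⟩)

lemma opt_div {t d : ℕ} {hd : 2 ≤ d} {n v : ℕ} (h1 : 0 < n) (h2 : d ∣ n)
    (h3 : sg t d hd (n / d) = v) : v ∈ opts t d hd n :=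
  (mem_opts t d hd n v).mpr (Or.inr ⟨h1, h2, h3.symm⟩)

lemma sum_succ (d : ℕ) : ∀ k, ∑ i ∈ Finset.Icc 1 (k + 1), d ^ i = d * ((∑ i ∈ Finset.Icc 1 k, d ^ i) + 1) := by
  intro k
  induction k with
  | zero => simp
  | succ k ih =>
    conv_rhs => rw [Finset.sum_Icc_succ_top (by omega : 1 ≤ k + 1)]
    rw [Finset.sum_Icc_succ_top (by omega : 1 ≤ k + 1 + 1), ih]
    ring

lemma alpha_zero (d : ℕ) : alpha d 0 = d := by simp [alpha]
lemma alpha_succ (d m : ℕ) : alpha d (m + 1) = d * (alpha d m + 1) := sum_succ d (m+1)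
lemma beta_zero (t d : ℕ) : beta t d 0 = t * d := by simp [beta]
lemma beta_succ (t d m : ℕ) : beta t d (m + 1) = d * (beta t d m + 1) := by
  unfold beta; rw [sum_succ d m]; ring

lemma step_mono {d a b c : ℕ} (hd1 : 1 ≤ d) (h : a + c ≤ b) : d * (a + 1) + c ≤ d * (b + 1) := by
  have h1 : c ≤ d * c := Nat.le_mul_of_pos_left c (by omega)
  have h2 : d * (a + 1 + c) ≤ d * (b + 1) := Nat.mul_le_mul_left d (by omega)
  calc d * (a + 1) + c ≤ d * (a + 1) + d * c := Nat.add_le_add_left h1 _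
    _ = d * (a + 1 + c) := by ring
    _ ≤ d * (b + 1) := h2

/-- the value pattern in the A-regions -/
def fA (t j : ℕ) : ℕ :=
  if j % t = 0 then t - 1 else if j % t = t - 1 then 0 else j % t

/-- value at `alpha` points -/
def aval (t m : ℕ) : ℕ := if 3 ≤ t ∨ m = 0 then t else 1

section
variable {t d : ℕ} (ht : 2 ≤ t) (hd : 2 ≤ d) (hmod : d % t = 1)

include ht

lemma fA_lt (j : ℕ) : fA t j < t := by
  unfold fA
  have := Nat.mod_lt j (show 0 < t by omega)
  split_ifs <;> omega

omit ht in
lemma fA_congr {j j' : ℕ} (h : j % t = j' % t) : fA t j = fA t j' := by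
  unfold fA; rw [h]

lemma fA_inj {j j' : ℕ} (h : fA t j = fA t j') : j % t = j' % t := by
  unfold fA at h
  have h1 := Nat.mod_lt j (show 0 < t by omega)
  have h2 := Nat.mod_lt j' (show 0 < t by omega)
  split_ifs at h <;> omega

lemma fA_mid {j : ℕ} (h1 : 1 ≤ j % t) (h2 : j % t ≤ t - 2) : fA t j = j % t := by
  unfold fA; split_ifs <;> omega

omit ht in
lemma fA_zero {j : ℕ} (h : j % t = 0) : fA t j = t - 1 := by
  unfold fA; split_ifs <;> omega

omit ht in
lemma fA_top {j : ℕ} (h : j % t = t - 1) : fA t j = 0 := by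
  unfold fA; split_ifs <;> omega

lemma fA_surj {w : ℕ} (hw : w < t) : ∃ ρ, ρ < t ∧ fA t ρ = w := by
  rcases Nat.eq_or_lt_of_le (Nat.le_of_lt_succ (show w < (t-1)+1 by omega)) with h | h
  · exact ⟨0, by omega, by rw [fA_zero (by simp)]; omega⟩
  · rcases Nat.eq_zero_or_pos w with h0 | h0
    · exact ⟨t - 1, by omega, by rw [h0, fA_top (Nat.mod_eq_of_lt (by omega))]⟩
    · exact ⟨w, hw, by rw [fA_mid ht (by rw [Nat.mod_eq_of_lt hw]; omega)
        (by rw [Nat.mod_eq_of_lt hw]; omega), Nat.mod_eq_of_lt hw]⟩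

lemma mod_ne {x s : ℕ} (h1 : 1 ≤ s) (h2 : s ≤ t - 1) (h3 : s ≤ x) :
    (x - s) % t ≠ x % t := by
  intro h
  have hx : x - s ≤ x := by omega
  have hh : x - s ≡ x [MOD t] := h
  have hdvd : t ∣ x - (x - s) := (Nat.modEq_iff_dvd' hx).mp hh
  have he : x - (x - s) = s := by omega
  rw [he] at hdvd
  have := Nat.le_of_dvd (by omega) hdvd
  omega

lemma exists_s {a w : ℕ} (ha : t - 1 ≤ a) (hw : w < t) (hne : w ≠ a % t) :
    ∃ s, 1 ≤ s ∧ s ≤ t - 1 ∧ s ≤ a ∧ (a - s) % t = w := by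
  obtain ⟨q, hq⟩ : ∃ q, a = t * q + a % t := ⟨a / t, (Nat.div_add_mod a t).symm⟩
  have hr : a % t < t := Nat.mod_lt a (by omega)
  rcases Nat.lt_or_ge w (a % t) with h | h
  · refine ⟨a % t - w, by omega, by omega, by omega, ?_⟩
    have : a - (a % t - w) = t * q + w := by omega
    rw [this, Nat.mul_add_mod]
    exact Nat.mod_eq_of_lt hw
  · have hgt : a % t < w := by omega
    obtain ⟨q', rfl⟩ : ∃ q', q = q' + 1 := by
      refine ⟨q - 1, ?_⟩
      rcases Nat.eq_zero_or_pos q with h0 | h0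
      · rw [h0] at hq; simp at hq; omega
      · omega
    have hq2 : a = t * q' + t + a % t := by
      have hm : t * (q' + 1) = t * q' + t := by ring
      omega
    refine ⟨a % t + t - w, by omega, by omega, by omega, ?_⟩
    have : a - (a % t + t - w) = t * q' + w := by omega
    rw [this, Nat.mul_add_mod]
    exact Nat.mod_eq_of_lt hw

omit ht in
lemma exists_decomp {a b r : ℕ} (hle : b + r ≤ a) (hm : a % t = (b + r) % t) :
    ∃ K, a = b + (t * K + r) := by
  have hh : b + r ≡ a [MOD t] := hm.symm
  obtain ⟨K, hK⟩ := (Nat.modEq_iff_dvd' hle).mp hh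
  exact ⟨K, by omega⟩

include hd hmod

lemma hdt : t + 1 ≤ d := by
  have h0 := Nat.div_add_mod d t
  rcases Nat.eq_zero_or_pos (d / t) with h | h
  · rw [h] at h0; omega
  · have : t ≤ t * (d / t) := Nat.le_mul_of_pos_right t h
    omega

lemma gapA : ∀ m, alpha d m + (2 * t - 1) ≤ beta t d m := by
  intro m
  have hdt' := hdt ht hd hmod
  induction m with
  | zero =>
    rw [alpha_zero, beta_zero]
    obtain ⟨t', rfl⟩ : ∃ t', t = t' + 2 := ⟨t - 2, by omega⟩
    obtain ⟨d', rfl⟩ : ∃ d', d = d' + t' + 3 := ⟨d - t' - 3, by omega⟩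
    have e : 2 * (t' + 2) - 1 = 2 * t' + 3 := by omega
    rw [e]; nlinarith
  | succ m ih =>
    rw [alpha_succ, beta_succ]
    exact step_mono (by omega) ih

lemma alpha_lt_beta : ∀ m, alpha d m < beta t d m := by
  intro m; have := gapA ht hd hmod m; omega

lemma gapB : ∀ m, beta t d m + 2 * d ≤ alpha d (m + 1) := by
  intro m
  have hdt' := hdt ht hd hmod
  induction m with
  | zero =>
    rw [beta_zero, alpha_succ, alpha_zero]
    have e : t * d + 2 * d = d * (t + 2) := by ring
    rw [e]
    exact Nat.mul_le_mul_left d (by omega)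
  | succ m ih =>
    rw [beta_succ, alpha_succ]
    exact step_mono (by omega) ih

lemma beta_lt_alpha_succ : ∀ m, beta t d m < alpha d (m + 1) := by
  intro m; have := gapB ht hd hmod m; omega

omit ht hmod in
lemma alpha_ge : ∀ m, d ≤ alpha d m := by
  intro m
  cases m with
  | zero => rw [alpha_zero]
  | succ m => rw [alpha_succ]; exact Nat.le_mul_of_pos_right d (by omega)

omit ht hd in
lemma mul_mod_d (x : ℕ) : d * x % t = x % t := by
  simp [Nat.mul_mod, hmod]

omit hd in
lemma alpha_mod : ∀ m, alpha d m % t = (m + 1) % t := by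
  intro m
  induction m with
  | zero =>
    rw [alpha_zero, hmod]
    exact (Nat.mod_eq_of_lt (by omega)).symm
  | succ m ih =>
    rw [alpha_succ, mul_mod_d hmod, Nat.add_mod, ih, ← Nat.add_mod]

omit ht hd in
lemma beta_mod : ∀ m, beta t d m % t = m % t := by
  intro m
  induction m with
  | zero => rw [beta_zero, Nat.mul_mod_right]; exact (Nat.zero_mod t).symm
  | succ m ih =>
    rw [beta_succ, mul_mod_d hmod, Nat.add_mod, ih, ← Nat.add_mod]

lemma jbeta_decomp (m : ℕ) :
    ∃ K, 1 ≤ K ∧ beta t d m = alpha d m + (t * K + (t - 1)) := by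
  have hle : alpha d m + (t - 1) ≤ beta t d m := by
    have := gapA ht hd hmod m; omega
  have hm : beta t d m % t = (alpha d m + (t - 1)) % t := by
    conv_rhs => rw [← Nat.mod_add_mod, alpha_mod ht hmod, Nat.mod_add_mod]
    rw [beta_mod hmod, show m + 1 + (t - 1) = m + t by omega, Nat.add_mod_right]
  obtain ⟨K, hK⟩ := exists_decomp hle hm
  refine ⟨K, ?_, hK⟩
  have := gapA ht hd hmod m
  rcases Nat.eq_zero_or_pos K with h0 | h0
  · rw [h0] at hK; omega
  · omega

lemma gap_decomp (m : ℕ) :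
    ∃ K, 1 ≤ K ∧ alpha d (m + 1) = beta t d m + (t * K + 2) := by
  have hdt' := hdt ht hd hmod
  have hle : beta t d m + 2 ≤ alpha d (m + 1) := by
    have := gapB ht hd hmod m; omega
  have hm : alpha d (m + 1) % t = (beta t d m + 2) % t := by
    conv_rhs => rw [← Nat.mod_add_mod, beta_mod hmod, Nat.mod_add_mod]
    rw [alpha_mod ht hmod]
  obtain ⟨K, hK⟩ := exists_decomp hle hm
  refine ⟨K, ?_, hK⟩
  have := gapB ht hd hmod m
  rcases Nat.eq_zero_or_pos K with h0 | h0
  · rw [h0] at hK; omega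
  · omega

end

def P (t d : ℕ) (hd : 2 ≤ d) (n : ℕ) : Prop :=
  (n < d → sg t d hd n = n % t) ∧
  (∀ m, n = alpha d m → sg t d hd n = aval t m) ∧
  (∀ m, alpha d m < n → n < beta t d m → sg t d hd n = fA t (n - alpha d m)) ∧
  (∀ m, n = beta t d m → sg t d hd n = t) ∧
  (∀ m, beta t d m < n → n < alpha d (m + 1) → sg t d hd n = (n - beta t d m - 1) % t)


lemma mod_tk1 {t : ℕ} (ht : 2 ≤ t) {X K i : ℕ} (hK : 1 ≤ K) (hi1 : 1 ≤ i) (hi2 : i ≤ t - 1)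
    (hX : X + i = t * K + 1) : X % t = (t + 1 - i) % t := by
  obtain ⟨K₁, rfl⟩ : ∃ K₁, K = K₁ + 1 := ⟨K - 1, by omega⟩
  have e : t * (K₁ + 1) = t * K₁ + t := by ring
  rcases Nat.eq_or_lt_of_le hi1 with h1 | h1
  · rw [show X = t * (K₁ + 1) by omega, Nat.mul_mod_right,
       show t + 1 - i = t by omega, Nat.mod_self]
  · rw [show X = t * K₁ + (t + 1 - i) by omega, Nat.mul_add_mod,
       Nat.mod_eq_of_lt (by omega)]

section
variable {t d : ℕ} {hd2 : 2 ≤ d} (ht : 2 ≤ t) (hmod : d % t = 1)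

include ht

lemma case_base {n : ℕ} (hn : n < d) (IH : ∀ k, k < n → P t d hd2 k) :
    sg t d hd2 n = n % t := by
  rcases Nat.eq_zero_or_pos n with rfl | hpos
  · rw [Nat.zero_mod]
    apply sg_eq_of
    · intro w hw; omega
    · intro hmem
      rcases (mem_opts _ _ _ _ _).mp hmem with ⟨s, h1, h2, h3, _⟩ | ⟨h1, _, _⟩
      · omega
      · omega
  · have hdvd : ¬ d ∣ n := fun hdvd => by
      have := Nat.le_of_dvd hpos hdvd; omega
    apply sg_eq_of
    · intro w hw
      have hwt : w < t := by
        have := Nat.mod_lt n (show 0 < t by omega); omega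
      rcases Nat.lt_or_ge n t with hcase | hcase
      · rw [Nat.mod_eq_of_lt hcase] at hw
        refine opt_sub (show 1 ≤ n - w by omega) (by omega) (by omega) ?_
        have hw2 : n - (n - w) = w := by omega
        rw [hw2, (IH w (by omega)).1 (by omega), Nat.mod_eq_of_lt (by omega)]
      · obtain ⟨s, hs1, hs2, hs3, hs4⟩ := exists_s ht (show t - 1 ≤ n by omega) hwt (by omega)
        refine opt_sub hs1 hs2 hs3 ?_
        rw [(IH (n - s) (by omega)).1 (by omega), hs4]
    · intro hmem
      rcases (mem_opts _ _ _ _ _).mp hmem with ⟨s, h1, h2, h3, h4⟩ | ⟨_, h2, _⟩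
      · rw [(IH (n - s) (by omega)).1 (by omega)] at h4
        exact mod_ne ht h1 h2 h3 h4.symm
      · exact hdvd h2

include hmod

lemma val_below {n : ℕ} (IH : ∀ k, k < n → P t d hd2 k) (m i : ℕ)
    (hi1 : 1 ≤ i) (hi2 : i ≤ t - 1) (hlt : alpha d m - i < n) :
    sg t d hd2 (alpha d m - i) = (t + 1 - i) % t := by
  have hdt' := hdt ht hd2 hmod
  cases m with
  | zero =>
    rw [alpha_zero] at *
    obtain ⟨k₀, hk⟩ : ∃ k, d = t * k + 1 := by
      refine ⟨d / t, ?_⟩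
      conv_lhs => rw [← Nat.div_add_mod d t]
      rw [hmod]
    have hk₀ : 1 ≤ k₀ := by
      rcases Nat.eq_zero_or_pos k₀ with h0 | h0
      · rw [h0] at hk; omega
      · exact h0
    rw [(IH (d - i) hlt).1 (by omega)]
    exact mod_tk1 ht hk₀ hi1 hi2 (by omega)
  | succ m' =>
    have hgap := gapB ht hd2 hmod m'
    have hα := alpha_ge hd2 (m' + 1)
    have h1 : beta t d m' < alpha d (m' + 1) - i := by omega
    have h2 : alpha d (m' + 1) - i < alpha d (m' + 1) := by omega
    rw [(IH _ hlt).2.2.2.2 m' h1 h2]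
    obtain ⟨K, hK1, hK⟩ := gap_decomp ht hd2 hmod m'
    exact mod_tk1 ht hK1 hi1 hi2 (by omega)


lemma case_alpha {n : ℕ} (IH : ∀ k, k < n → P t d hd2 k) (m : ℕ) (hn : n = alpha d m) :
    sg t d hd2 n = aval t m := by
  subst hn
  have hdt' := hdt ht hd2 hmod
  have hα := alpha_ge hd2 m
  have hdvd : d ∣ alpha d m := by
    cases m with
    | zero => rw [alpha_zero]
    | succ m' => rw [alpha_succ]; exact Dvd.intro _ rfl
  have hpos : 0 < alpha d m := by omega
  have cov_sub : ∀ w, w < t → w ≠ 1 → w ∈ opts t d hd2 (alpha d m) := by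
    intro w hw hw1
    rcases Nat.eq_zero_or_pos w with rfl | hwpos
    · refine opt_sub (le_refl 1) (by omega) (by omega) ?_
      rw [val_below ht hmod IH m 1 (by omega) (by omega) (by omega),
        show t + 1 - 1 = t by omega, Nat.mod_self]
    · refine opt_sub (s := t + 1 - w) (by omega) (by omega) (by omega) ?_
      rw [val_below ht hmod IH m (t + 1 - w) (by omega) (by omega) (by omega),
        show t + 1 - (t + 1 - w) = w by omega, Nat.mod_eq_of_lt hw]
  have exc_sub : ∀ s, 1 ≤ s → s ≤ t - 1 → sg t d hd2 (alpha d m - s) ≠ aval t m := by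
    intro s hs1 hs2
    rw [val_below ht hmod IH m s hs1 hs2 (by omega)]
    have hlt : (t + 1 - s) % t < t := Nat.mod_lt _ (by omega)
    unfold aval
    split_ifs with h
    · omega
    · have ht2 : t = 2 := by omega
      have hs : s = 1 := by omega
      rw [hs, show t + 1 - 1 = t by omega, Nat.mod_self]
      omega
  cases m with
  | zero =>
    have haval : aval t 0 = t := by unfold aval; rw [if_pos (Or.inr rfl)]
    rw [haval]
    have hq : alpha d 0 / d = 1 := by rw [alpha_zero, Nat.div_self (by omega)]
    have hdval : sg t d hd2 (alpha d 0 / d) = 1 := by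
      rw [hq, (IH 1 (by omega)).1 (by omega), Nat.mod_eq_of_lt (by omega)]
    apply sg_eq_of
    · intro w hw
      rcases Nat.decEq w 1 with h1 | h1
      · exact cov_sub w hw h1
      · subst h1; exact opt_div hpos hdvd hdval
    · intro hmem
      rcases (mem_opts _ _ _ _ _).mp hmem with ⟨s, h1, h2, h3, h4⟩ | ⟨_, _, h4⟩
      · exact exc_sub s h1 h2 (by rw [← h4, haval])
      · rw [hdval] at h4; omega
  | succ m' =>
    have hgapA := gapA ht hd2 hmod m'
    have hba := beta_lt_alpha_succ ht hd2 hmod m'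
    have hq : alpha d (m' + 1) / d = alpha d m' + 1 := by
      rw [alpha_succ]; exact Nat.mul_div_cancel_left _ (by omega)
    have hv1 : sg t d hd2 (alpha d m' + 1) = fA t 1 := by
      have h := (IH (alpha d m' + 1) (by omega)).2.2.1 m' (by omega) (by omega)
      rw [h, Nat.add_sub_cancel_left]
    rcases Nat.lt_or_ge t 3 with ht2' | ht3
    · have ht2 : t = 2 := by omega
      have haval : aval t (m' + 1) = 1 := by
        unfold aval; rw [if_neg (by push_neg; exact ⟨by omega, by omega⟩)]
      have hfa : fA t 1 = 0 := by
        unfold fA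
        rw [Nat.mod_eq_of_lt (show 1 < t by omega),
          if_neg (show ¬(1 = 0) by omega), if_pos (show 1 = t - 1 by omega)]
      rw [haval]
      apply sg_eq_of
      · intro w hw
        have hw0 : w = 0 := by omega
        subst hw0
        exact cov_sub 0 (by omega) (by omega)
      · intro hmem
        rcases (mem_opts _ _ _ _ _).mp hmem with ⟨s, h1, h2, h3, h4⟩ | ⟨_, _, h4⟩
        · exact exc_sub s h1 h2 (by rw [← h4, haval])
        · rw [hq, hv1, hfa] at h4; omega
    · have haval : aval t (m' + 1) = t := by unfold aval; rw [if_pos (Or.inl ht3)]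
      have hfa : fA t 1 = 1 := by
        unfold fA
        rw [Nat.mod_eq_of_lt (show 1 < t by omega),
          if_neg (show ¬(1 = 0) by omega), if_neg (show ¬(1 = t - 1) by omega)]
      rw [haval]
      apply sg_eq_of
      · intro w hw
        rcases Nat.decEq w 1 with h1 | h1
        · exact cov_sub w hw h1
        · subst h1
          exact opt_div hpos hdvd (by rw [hq, hv1, hfa])
      · intro hmem
        rcases (mem_opts _ _ _ _ _).mp hmem with ⟨s, h1, h2, h3, h4⟩ | ⟨_, _, h4⟩
        · exact exc_sub s h1 h2 (by rw [← h4, haval])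
        · rw [hq, hv1, hfa] at h4; omega


omit hmod in
lemma fA_small {w : ℕ} (hw1 : 1 ≤ w) (hw2 : w ≤ t - 2) : fA t w = w := by
  have e : w % t = w := Nat.mod_eq_of_lt (by omega)
  rw [fA_mid ht (by omega) (by omega), e]

omit ht hmod in
lemma lt_mul_self {e q : ℕ} (he : 2 ≤ e) (hq : 1 ≤ q) : q < e * q := by
  obtain ⟨e₁, rfl⟩ : ∃ e₁, e = e₁ + 2 := ⟨e - 2, by omega⟩
  have ee : (e₁ + 2) * q = e₁ * q + 2 * q := by ring
  omega

lemma case_A {n : ℕ} (IH : ∀ k, k < n → P t d hd2 k) (m : ℕ)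
    (h1 : alpha d m < n) (h2 : n < beta t d m) :
    sg t d hd2 n = fA t (n - alpha d m) := by
  have hdt' := hdt ht hd2 hmod
  have hα := alpha_ge hd2 m
  set j := n - alpha d m with hj
  have hj1 : 1 ≤ j := by omega
  have hn : n = alpha d m + j := by omega
  have hfalt := fA_lt ht j
  have valA : ∀ j', 1 ≤ j' → j' < j → sg t d hd2 (alpha d m + j') = fA t j' := by
    intro j' ha hb
    have h := (IH (alpha d m + j') (by omega)).2.2.1 m (by omega) (by omega)
    rw [h, Nat.add_sub_cancel_left]
  apply sg_eq_of
  · -- coverage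
    intro w hw
    have hwt : w < t := by omega
    rcases Nat.lt_or_ge j t with hjt | hjt
    · have hjm : j % t = j := Nat.mod_eq_of_lt hjt
      have hjne : j ≠ t - 1 := by
        intro hh
        rw [fA_top (by omega)] at hw
        omega
      have hfj : fA t j = j := fA_small ht (by omega) (by omega)
      rw [hfj] at hw
      rcases Nat.eq_zero_or_pos w with rfl | hwpos
      · refine opt_sub (s := j + 1) (by omega) (by omega) (by omega) ?_
        have e : n - (j + 1) = alpha d m - 1 := by omega
        rw [e, val_below ht hmod IH m 1 (by omega) (by omega) (by omega),
          show t + 1 - 1 = t by omega, Nat.mod_self]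
      · refine opt_sub (s := j - w) (by omega) (by omega) (by omega) ?_
        have e : n - (j - w) = alpha d m + w := by omega
        rw [e, valA w (by omega) (by omega)]
        exact fA_small ht (by omega) (by omega)
    · obtain ⟨ρ, hρ1, hρ2⟩ := fA_surj ht hwt
      have hρj : ρ ≠ j % t := by
        intro hh
        have heq : fA t ρ = fA t j := fA_congr (by rw [hh]; exact Nat.mod_mod_of_dvd j (dvd_refl t))
        omega
      obtain ⟨s, hs1, hs2, hs3, hs4⟩ := exists_s ht (show t - 1 ≤ j by omega) hρ1 hρj
      refine opt_sub hs1 hs2 (by omega) ?_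
      have e : n - s = alpha d m + (j - s) := by omega
      rw [e, valA (j - s) (by omega) (by omega), ← hρ2]
      exact fA_congr (by rw [hs4, Nat.mod_eq_of_lt hρ1])
  · -- exclusion
    intro hmem
    rcases (mem_opts _ _ _ _ _).mp hmem with ⟨s, hs1, hs2, hs3, h4⟩ | ⟨_, hdvd, h4⟩
    · rcases Nat.lt_trichotomy s j with hsj | hsj | hsj
      · have e : n - s = alpha d m + (j - s) := by omega
        rw [e, valA (j - s) (by omega) (by omega)] at h4
        exact mod_ne ht hs1 hs2 (by omega) (fA_inj ht h4).symm
      · have e : n - s = alpha d m := by omega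
        rw [e, (IH (alpha d m) (by omega)).2.1 m rfl] at h4
        unfold aval at h4
        split_ifs at h4 with hcond
        · omega
        · have hno := not_or.mp hcond
          have ht2 : t = 2 := by omega
          have hjone : j % t = t - 1 := by
            rw [show j = 1 by omega, Nat.mod_eq_of_lt (by omega)]
            omega
          rw [fA_top hjone] at h4
          omega
      · have e : n - s = alpha d m - (s - j) := by omega
        rw [e, val_below ht hmod IH m (s - j) (by omega) (by omega) (by omega)] at h4
        have hfj : fA t j = j := fA_small ht (by omega) (by omega)
        rw [hfj] at h4
        rcases Nat.eq_or_lt_of_le (show 1 ≤ s - j by omega) with hi | hi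
        · rw [show t + 1 - (s - j) = t by omega, Nat.mod_self] at h4
          omega
        · rw [Nat.mod_eq_of_lt (show t + 1 - (s - j) < t by omega)] at h4
          omega
    · -- division option
      cases m with
      | zero =>
        have ha0 : alpha d 0 = d := alpha_zero d
        obtain ⟨q, hq⟩ := hdvd
        have hb0 : beta t d 0 = t * d := beta_zero t d
        have hq0 : q ≠ 0 := by rintro rfl; omega
        have hq1e : q ≠ 1 := by rintro rfl; omega
        have hqt : q < t := by
          by_contra hge
          push_neg at hge
          have : d * t ≤ d * q := Nat.mul_le_mul_left d hge
          have e : t * d = d * t := by ring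
          omega
        have hnd : n / d = q := by rw [hq]; exact Nat.mul_div_cancel_left q (by omega)
        rw [hnd, (IH q (by omega)).1 (by omega), Nat.mod_eq_of_lt (by omega)] at h4
        have hjq : j % t = q - 1 := by
          obtain ⟨q₁, rfl⟩ : ∃ q₁, q = q₁ + 1 := ⟨q - 1, by omega⟩
          have e2 : d * (q₁ + 1) = d * q₁ + d := by ring
          have e : j = d * q₁ := by omega
          rw [e, mul_mod_d hmod, Nat.mod_eq_of_lt (by omega)]
          omega
        have : fA t j = q - 1 := by rw [fA_mid ht (by omega) (by omega), hjq]
        omega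
      | succ m' =>
        obtain ⟨q, hq⟩ := hdvd
        have hA := alpha_succ d m'
        have hB := beta_succ t d m'
        have hq1 : alpha d m' + 1 < q :=
          Nat.lt_of_mul_lt_mul_left (show d * (alpha d m' + 1) < d * q by omega)
        have hq2 : q < beta t d m' + 1 :=
          Nat.lt_of_mul_lt_mul_left (show d * q < d * (beta t d m' + 1) by omega)
        have hnd : n / d = q := by rw [hq]; exact Nat.mul_div_cancel_left q (by omega)
        have hqn : q < n := by
          have := lt_mul_self (show 2 ≤ d by omega) (show 1 ≤ q by omega)
          omega
        rcases Nat.eq_or_lt_of_le (show q ≤ beta t d m' by omega) with hqB | hqB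
        · rw [hnd, hqB, (IH _ (by omega)).2.2.2.1 m' rfl] at h4
          omega
        · rw [hnd, (IH q (by omega)).2.2.1 m' (by omega) (by omega)] at h4
          have hji := fA_inj ht h4
          have e : j = d * (q - alpha d m' - 1) := by
            have hx : q = (q - alpha d m' - 1) + (alpha d m' + 1) := by omega
            have e2 : d * q = d * (q - alpha d m' - 1) + d * (alpha d m' + 1) := by
              conv_lhs => rw [hx]
              ring
            omega
          rw [e, mul_mod_d hmod] at hji
          exact mod_ne ht (le_refl 1) (by omega) (by omega) hji


lemma case_beta {n : ℕ} (IH : ∀ k, k < n → P t d hd2 k) (m : ℕ) (hn : n = beta t d m) :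
    sg t d hd2 n = t := by
  subst hn
  have hdt' := hdt ht hd2 hmod
  have hα := alpha_ge hd2 m
  have hab := alpha_lt_beta ht hd2 hmod m
  obtain ⟨K, hK1, hK⟩ := jbeta_decomp ht hd2 hmod m
  have htK : t ≤ t * K := Nat.le_mul_of_pos_right t (by omega)
  have valA : ∀ j', 1 ≤ j' → alpha d m + j' < beta t d m →
      sg t d hd2 (alpha d m + j') = fA t j' := by
    intro j' ha hb
    have h := (IH (alpha d m + j') (by omega)).2.2.1 m (by omega) hb
    rw [h, Nat.add_sub_cancel_left]
  have hdvd : d ∣ beta t d m := by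
    cases m with
    | zero => rw [beta_zero]; exact dvd_mul_left d t
    | succ m' => rw [beta_succ]; exact dvd_mul_right d _
  have hdval : sg t d hd2 (beta t d m / d) = 0 := by
    cases m with
    | zero =>
      have hb0 := beta_zero t d
      have e : beta t d 0 / d = t := by rw [beta_zero]; exact Nat.mul_div_cancel t (by omega)
      rw [e, (IH t (by omega)).1 (by omega), Nat.mod_self]
    | succ m' =>
      have hblt := gapB ht hd2 hmod m'
      have habs := alpha_lt_beta ht hd2 hmod (m' + 1)
      have e : beta t d (m' + 1) / d = beta t d m' + 1 := by
        rw [beta_succ]; exact Nat.mul_div_cancel_left _ (by omega)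
      have h := (IH (beta t d m' + 1) (by omega)).2.2.2.2 m' (by omega) (by omega)
      rw [e, h, show beta t d m' + 1 - beta t d m' - 1 = 0 by omega, Nat.zero_mod]
  apply sg_eq_of
  · intro w hw
    rcases Nat.eq_zero_or_pos w with rfl | hwpos
    · exact opt_div (by omega) hdvd hdval
    · by_cases hwt1 : w = t - 1
      · refine opt_sub (s := t - 1) (by omega) (le_refl _) (by omega) ?_
        have e : beta t d m - (t - 1) = alpha d m + t * K := by omega
        rw [e, valA (t * K) (by omega) (by omega), fA_zero (Nat.mul_mod_right t K)]
        omega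
      · refine opt_sub (s := t - 1 - w) (by omega) (by omega) (by omega) ?_
        have e : beta t d m - (t - 1 - w) = alpha d m + (t * K + w) := by omega
        have hmodw : (t * K + w) % t = w := by
          rw [Nat.mul_add_mod]; exact Nat.mod_eq_of_lt (by omega)
        rw [e, valA (t * K + w) (by omega) (by omega), fA_mid ht (by omega) (by omega), hmodw]
  · intro hmem
    rcases (mem_opts _ _ _ _ _).mp hmem with ⟨s, hs1, hs2, hs3, h4⟩ | ⟨_, _, h4⟩
    · have e : beta t d m - s = alpha d m + (t * K + (t - 1) - s) := by omega
      rw [e, valA (t * K + (t - 1) - s) (by omega) (by omega)] at h4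
      have := fA_lt ht (t * K + (t - 1) - s)
      omega
    · rw [hdval] at h4; omega

lemma case_B {n : ℕ} (IH : ∀ k, k < n → P t d hd2 k) (m : ℕ)
    (hb1 : beta t d m < n) (hb2 : n < alpha d (m + 1)) :
    sg t d hd2 n = (n - beta t d m - 1) % t := by
  have hdt' := hdt ht hd2 hmod
  have hα := alpha_ge hd2 m
  have hab := alpha_lt_beta ht hd2 hmod m
  obtain ⟨K, hK1, hK⟩ := jbeta_decomp ht hd2 hmod m
  have htK : t ≤ t * K := Nat.le_mul_of_pos_right t (by omega)
  set k := n - beta t d m with hkdef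
  have hk1 : 1 ≤ k := by omega
  have hvlt : (k - 1) % t < t := Nat.mod_lt _ (by omega)
  have valB : ∀ k', 1 ≤ k' → k' < k → sg t d hd2 (beta t d m + k') = (k' - 1) % t := by
    intro k' ha hb
    have h := (IH (beta t d m + k') (by omega)).2.2.2.2 m (by omega) (by omega)
    rw [h, Nat.add_sub_cancel_left]
  have valA : ∀ j', 1 ≤ j' → alpha d m + j' < beta t d m →
      sg t d hd2 (alpha d m + j') = fA t j' := by
    intro j' ha hb
    have h := (IH (alpha d m + j') (by omega)).2.2.1 m (by omega) hb
    rw [h, Nat.add_sub_cancel_left]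
  apply sg_eq_of
  · intro w hw
    have hwt : w < t := by omega
    rcases Nat.lt_or_ge k t with hkt | hkt
    · rw [Nat.mod_eq_of_lt (by omega)] at hw
      refine opt_sub (s := k - 1 - w) (by omega) (by omega) (by omega) ?_
      have e : n - (k - 1 - w) = beta t d m + (w + 1) := by omega
      rw [e, valB (w + 1) (by omega) (by omega), Nat.add_sub_cancel]
      exact Nat.mod_eq_of_lt (by omega)
    · obtain ⟨s, hs1, hs2, hs3, hs4⟩ :=
        exists_s ht (show t - 1 ≤ k - 1 by omega) hwt (by omega)
      refine opt_sub hs1 hs2 (by omega) ?_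
      have e : n - s = beta t d m + (k - s) := by omega
      rw [e, valB (k - s) (by omega) (by omega), show k - s - 1 = k - 1 - s by omega, hs4]
  · intro hmem
    rcases (mem_opts _ _ _ _ _).mp hmem with ⟨s, hs1, hs2, hs3, h4⟩ | ⟨_, hdvd, h4⟩
    · rcases Nat.lt_trichotomy s k with hsk | hsk | hsk
      · have e : n - s = beta t d m + (k - s) := by omega
        rw [e, valB (k - s) (by omega) (by omega),
          show k - s - 1 = k - 1 - s by omega] at h4
        exact (mod_ne ht hs1 hs2 (by omega)) h4.symm
      · have e : n - s = beta t d m := by omega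
        rw [e, (IH (beta t d m) (by omega)).2.2.2.1 m rfl] at h4
        omega
      · have e : n - s = alpha d m + (t * K + (t - 1) - (s - k)) := by omega
        have hmodx : (t * K + (t - 1) - (s - k)) % t = t - 1 - (s - k) := by
          rw [show t * K + (t - 1) - (s - k) = t * K + (t - 1 - (s - k)) by omega,
            Nat.mul_add_mod]
          exact Nat.mod_eq_of_lt (by omega)
        rw [e, valA (t * K + (t - 1) - (s - k)) (by omega) (by omega),
          fA_mid ht (by omega) (by omega), hmodx] at h4
        rw [Nat.mod_eq_of_lt (by omega)] at h4
        omega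
    · obtain ⟨q, hq⟩ := hdvd
      have hqpos : 1 ≤ q := by
        rcases Nat.eq_zero_or_pos q with rfl | h; · omega
        · exact h
      have hqn : q < n := by
        have := lt_mul_self (show 2 ≤ d by omega) hqpos
        omega
      have hnd : n / d = q := by rw [hq]; exact Nat.mul_div_cancel_left q (by omega)
      cases m with
      | zero =>
        have hb0 : beta t d 0 = t * d := beta_zero t d
        have ha0 : alpha d 0 = d := alpha_zero d
        have ha1 : alpha d 1 = d * (d + 1) := by rw [alpha_succ, alpha_zero]
        have hb2' : n < alpha d 1 := hb2
        have hqt : t < q := by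
          by_contra hle
          push_neg at hle
          have h5 : d * q ≤ d * t := Nat.mul_le_mul_left d hle
          have e : d * t = t * d := by ring
          omega
        have hqd : q ≤ d := by
          by_contra hgt
          push_neg at hgt
          have h5 : d * (d + 1) ≤ d * q := Nat.mul_le_mul_left d hgt
          omega
        rcases Nat.eq_or_lt_of_le hqd with hqd' | hqd'
        · rw [hnd, hqd'] at h4
          have hv := (IH d (by omega)).2.1 0 (alpha_zero d).symm
          rw [hv] at h4
          have hav : aval t 0 = t := by unfold aval; rw [if_pos (Or.inr rfl)]
          omega
        · rw [hnd, (IH q (by omega)).1 (by omega)] at h4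
          obtain ⟨y, rfl⟩ : ∃ y, q = y + t := ⟨q - t, by omega⟩
          have e2 : d * (y + t) = d * y + d * t := by ring
          have e3 : d * t = t * d := by ring
          have ek : k = d * y := by omega
          have hqm : (y + t) % t = k % t := by
            rw [Nat.add_mod_right, ek, mul_mod_d hmod]
          rw [hqm] at h4
          exact (mod_ne ht (le_refl 1) (by omega) (by omega)) h4
      | succ m' =>
        have hB := beta_succ t d m'
        have hA2 := alpha_succ d (m' + 1)
        have hq1 : beta t d m' + 1 < q :=
          Nat.lt_of_mul_lt_mul_left (show d * (beta t d m' + 1) < d * q by omega)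
        have hq2 : q < alpha d (m' + 1) + 1 :=
          Nat.lt_of_mul_lt_mul_left (show d * q < d * (alpha d (m' + 1) + 1) by omega)
        rcases Nat.eq_or_lt_of_le (show q ≤ alpha d (m' + 1) by omega) with hqA | hqA
        · rw [hnd, hqA, (IH _ (by omega)).2.1 (m' + 1) rfl] at h4
          obtain ⟨K₂, hK₂1, hK₂⟩ := gap_decomp ht hd2 hmod m'
          obtain ⟨k₀, hk₀⟩ : ∃ k₀, d = t * k₀ + 1 :=
            ⟨d / t, by conv_lhs => rw [← Nat.div_add_mod d t]; rw [hmod]⟩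
          have e0 : q = (beta t d m' + 1) + (t * K₂ + 1) := by omega
          have e2 : d * ((beta t d m' + 1) + (t * K₂ + 1)) =
              d * (beta t d m' + 1) + (t * (d * K₂) + d) := by ring
          have e2' : d * q = d * (beta t d m' + 1) + (t * (d * K₂) + d) := by
            rw [e0]; exact e2
          have e4 : t * (d * K₂ + k₀) = t * (d * K₂) + t * k₀ := by ring
          have ekk : k - 1 = t * (d * K₂ + k₀) := by omega
          have hv0 : (k - 1) % t = 0 := by rw [ekk, Nat.mul_mod_right]
          have hav : 1 ≤ aval t (m' + 1) := by unfold aval; split_ifs <;> omega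
          omega
        · rw [hnd, (IH q (by omega)).2.2.2.2 m' (by omega) (by omega)] at h4
          obtain ⟨X, hXq, hX1⟩ : ∃ X, q = (beta t d m' + 1) + X ∧ 1 ≤ X :=
            ⟨q - beta t d m' - 1, by omega, by omega⟩
          have e2 : d * ((beta t d m' + 1) + X) = d * (beta t d m' + 1) + d * X := by ring
          have e2' : d * q = d * (beta t d m' + 1) + d * X := by rw [hXq]; exact e2
          have ekk : k = d * X := by omega
          rw [show q - beta t d m' - 1 = X by omega] at h4
          rw [show X % t = k % t by rw [ekk, mul_mod_d hmod]] at h4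
          exact (mod_ne ht (le_refl 1) (by omega) (by omega)) h4

end

theorem sg_char (t d : ℕ) (ht : 2 ≤ t) (hd2 : 2 ≤ d) (hmod : d % t = 1) :
    ∀ n, P t d hd2 n := by
  intro n
  induction n using Nat.strong_induction_on with
  | _ n IH =>
    exact ⟨fun h => case_base ht h IH,
      fun m hm => case_alpha ht hmod IH m hm,
      fun m hm1 hm2 => case_A ht hmod IH m hm1 hm2,
      fun m hm => case_beta ht hmod IH m hm,
      fun m hm1 hm2 => case_B ht hmod IH m hm1 hm2⟩

end IMark

theorem sg_beta (t d : ℕ) (ht : 2 ≤ t) (hd : 2 ≤ d) (hmod : d % t = 1) (m : ℕ) :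
    sg t d hd (beta t d m) = t :=
  (IMark.sg_char t d ht hd hmod (beta t d m)).2.2.2.1 m rfl
end

section
/- For every m ≥ 1 and every n with β_{m−1} < n < α_m, SG(n) = (n − β_{m−1} − 1) mod t, where SG is the Sprague–Grundy function of the game i-Mark([1,t−1],{d}). (That is, the SG sequence of the interval A_m = [β_{m−1}+1, α_m−1] is (0,1,…,t−1) repeated (α_m − β_{m−1} − 2)/t times followed by 0.) -/
set_option linter.unusedSectionVars false
set_option linter.unusedVariables false
set_option maxHeartbeats 1000000

lemma mex_eq' {s : Finset ℕ} {v : ℕ} (h1 : v ∉ s) (h2 : ∀ k < v, k ∈ s) : mex s = v := by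
  have hv : v ∈ {x : ℕ | x ∉ s} := h1
  refine le_antisymm (Nat.sInf_le hv) ?_
  by_contra h
  push_neg at h
  have hm : sInf {x : ℕ | x ∉ s} ∈ {x : ℕ | x ∉ s} := Nat.sInf_mem ⟨v, hv⟩
  exact hm (h2 _ h)

lemma sg_eq_of (t d : ℕ) (hd : 2 ≤ d) (n v : ℕ)
    (hA : ∀ s, 1 ≤ s → s ≤ min (t-1) n → sg t d hd (n-s) ≠ v)
    (hB : 0 < n → d ∣ n → sg t d hd (n/d) ≠ v)
    (hC : ∀ k, k < v → (∃ s, 1 ≤ s ∧ s ≤ min (t-1) n ∧ sg t d hd (n-s) = k) ∨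
          (0 < n ∧ d ∣ n ∧ sg t d hd (n/d) = k)) :
    sg t d hd n = v := by
  rw [sg]
  apply mex_eq'
  · intro hmem
    rcases Finset.mem_union.1 hmem with h | h
    · rcases Finset.mem_image.1 h with ⟨⟨s, hs⟩, -, hval⟩
      rw [Finset.mem_Icc] at hs
      exact hA s hs.1 hs.2 hval
    · split_ifs at h with hcond
      · rw [Finset.mem_singleton] at h
        exact hB hcond.1 hcond.2 h.symm
      · simp at h
  · intro k hk
    rcases hC k hk with ⟨s, h1, h2, h3⟩ | ⟨h1, h2, h3⟩
    · apply Finset.mem_union_left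
      exact Finset.mem_image.2 ⟨⟨s, Finset.mem_Icc.2 ⟨h1, h2⟩⟩, Finset.mem_attach _ _, h3⟩
    · apply Finset.mem_union_right
      rw [dif_pos ⟨h1, h2⟩, Finset.mem_singleton]
      exact h3.symm

lemma alpha_zero (d : ℕ) : alpha d 0 = d := by simp [alpha]

lemma alpha_succ_top (d m : ℕ) : alpha d (m+1) = alpha d m + d^(m+2) := by
  unfold alpha
  rw [Finset.sum_Icc_succ_top (by omega)]

lemma alpha_succ (d : ℕ) : ∀ m, alpha d (m+1) = d * (1 + alpha d m)
  | 0 => by rw [alpha_succ_top, alpha_zero]; ring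
  | (m+1) => by
      calc alpha d (m+2) = alpha d (m+1) + d^(m+1+2) := alpha_succ_top d (m+1)
        _ = d * (1 + alpha d m) + d * d^(m+2) := by rw [alpha_succ d m]; ring
        _ = d * (1 + (alpha d m + d^(m+2))) := by ring
        _ = d * (1 + alpha d (m+1)) := by rw [alpha_succ_top d m]

lemma beta_eq (t d m : ℕ) (ht : 1 ≤ t) : beta t d m = alpha d m + (t-1) * d^(m+1) := by
  obtain ⟨u, hu⟩ : ∃ u, t = u + 1 := ⟨t-1, by omega⟩
  subst hu
  unfold beta alpha
  rw [Finset.sum_Icc_succ_top (by omega : 1 ≤ m + 1)]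
  simp only [Nat.add_sub_cancel]
  ring

lemma beta_zero (t d : ℕ) : beta t d 0 = t * d := by simp [beta]

lemma beta_succ (t d m : ℕ) (ht : 1 ≤ t) : beta t d (m+1) = d * (1 + beta t d m) := by
  rw [beta_eq t d (m+1) ht, beta_eq t d m ht, alpha_succ]
  ring

/-- swap of `0` and `t-1` among residues -/
def hh (t r : ℕ) : ℕ := if r = 0 then t - 1 else if r = t - 1 then 0 else r

/-- B-interval values -/
def bval (t d m j : ℕ) : ℕ :=
  if j = 0 then (if t = 2 ∧ 1 ≤ m then 1 else t)
  else if j = (t-1) * d^(m+1) then t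
  else hh t (j % t)

section
variable {t d : ℕ} (ht : 2 ≤ t) (hd : 2 ≤ d) (hmod : d % t = 1)

include ht hd hmod in
lemma hdt : t + 1 ≤ d := by
  rcases lt_trichotomy d t with h | h | h
  · rw [Nat.mod_eq_of_lt h] at hmod; omega
  · subst h; rw [Nat.mod_self] at hmod; omega
  · omega

lemma modlem2 (a b : ℕ) : (a * t + b) % t = b % t := by
  rw [Nat.add_mod, Nat.mul_mod_left, Nat.zero_add, Nat.mod_mod_of_dvd _ dvd_rfl]

lemma modlem (a b : ℕ) (hb : b < t) : (a * t + b) % t = b := by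
  rw [modlem2, Nat.mod_eq_of_lt hb]

lemma exists_qr (ht' : 0 < t) (c : ℕ) : ∃ q r, c = q * t + r ∧ r < t ∧ c % t = r :=
  ⟨c / t, c % t, by rw [Nat.div_add_mod' c t], Nat.mod_lt _ ht', rfl⟩

include ht in
lemma shift_mod {q r : ℕ} (s : ℕ) (hr : r < t) (hs : s < t) (hsle : s ≤ q * t + r) :
    (q * t + r - s) % t = (if s ≤ r then r - s else t + r - s) := by
  split_ifs with h
  · have he : q*t + r - s = q*t + (r - s) := by omega
    rw [he, modlem _ _ (by omega)]
  · have hq : 1 ≤ q := by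
      by_contra hq
      push_neg at hq
      have : q = 0 := by omega
      subst this
      simp at hsle
      omega
    obtain ⟨q', hq'⟩ : ∃ q', q = q' + 1 := ⟨q-1, by omega⟩
    subst hq'
    have he : (q'+1)*t + r - s = q'*t + (t + r - s) := by
      have ht2 : (q'+1)*t = q'*t + t := by ring
      omega
    rw [he, modlem _ _ (by omega)]

include ht in
lemma succ_mod_ne (x : ℕ) : (x+1) % t ≠ x % t := by
  obtain ⟨q, r, hc, hrt, hcr⟩ := exists_qr (by omega : 0 < t) x
  rw [hcr]
  by_cases h : r = t - 1
  · have he : x + 1 = (q+1) * t + 0 := by subst hc; have : (q+1)*t = q*t + t := by ring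
                                          omega
    rw [he, modlem _ _ (by omega)]
    omega
  · have he : x + 1 = q * t + (r+1) := by omega
    rw [he, modlem _ _ (by omega)]
    omega

include ht hmod in
lemma pow_mod_one (k : ℕ) : d ^ k % t = 1 := by
  rw [Nat.pow_mod, hmod, one_pow, Nat.mod_eq_of_lt (by omega)]

include hd in
lemma pow_ge (m : ℕ) : d ≤ d ^ (m+1) := by
  calc d = d^1 := (pow_one d).symm
  _ ≤ d^(m+1) := Nat.pow_le_pow_right (by omega) (by omega)

include ht hd hmod in
lemma J_facts (m : ℕ) : ((t-1) * d^(m+1)) % t = t - 1 ∧ t + 1 ≤ (t-1) * d^(m+1) := by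
  constructor
  · rw [Nat.mul_mod, pow_mod_one ht hmod, mul_one, Nat.mod_mod_of_dvd _ dvd_rfl]
    exact Nat.mod_eq_of_lt (by omega)
  · have h1 : d ≤ d^(m+1) := pow_ge hd m
    have h2 : t + 1 ≤ d := hdt ht hd hmod
    calc t + 1 ≤ 1 * d := by omega
    _ ≤ (t-1) * d^(m+1) := Nat.mul_le_mul (by omega) (by omega)

include ht hd hmod in
lemma gapAB (m : ℕ) : ∃ g, alpha d (m+1) = beta t d m + 1 + g ∧ g % t = 1 ∧ t + 1 ≤ g := by
  have hdt' : t + 1 ≤ d := hdt ht hd hmod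
  set D := d - (t-1) with hD
  have hD2 : 2 ≤ D := by omega
  have key0 : alpha d (m+1) = beta t d m + d^(m+1) * D := by
    rw [alpha_succ_top, beta_eq t d m (by omega)]
    have h3 : d^(m+2) = (t-1) * d^(m+1) + d^(m+1) * D := by
      have hsum : (t-1) + D = d := by omega
      calc d^(m+2) = d^(m+1) * d := by ring
      _ = d^(m+1) * ((t-1) + D) := by rw [hsum]
      _ = (t-1) * d^(m+1) + d^(m+1) * D := by ring
    omega
  obtain ⟨P, hP⟩ : ∃ P, P = d^(m+1) * D := ⟨_, rfl⟩
  have key : alpha d (m+1) = beta t d m + P := by rw [hP]; exact key0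
  have hPge : 2 * (t+1) ≤ P := by
    rw [hP]
    have h1 : d ≤ d^(m+1) := pow_ge hd m
    calc 2 * (t+1) ≤ d * 2 := by omega
    _ ≤ d^(m+1) * D := Nat.mul_le_mul (by omega) (by omega)
  have hPmod : P % t = 2 % t := by
    obtain ⟨a, ha⟩ : ∃ a, d = a * t + 1 := ⟨d / t, by rw [← hmod, Nat.div_add_mod' d t]⟩
    have ha1 : 1 ≤ a := by nlinarith
    have hDval : D = (a-1) * t + 2 := by
      have h4 : (a-1) * t + t = a * t := by
        have h5 : a - 1 + 1 = a := by omega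
        calc (a-1)*t + t = ((a-1)+1) * t := by ring
        _ = a * t := by rw [h5]
      omega
    rw [hP, Nat.mul_mod, pow_mod_one ht hmod, hDval, one_mul, modlem2,
      Nat.mod_mod_of_dvd _ dvd_rfl]
  refine ⟨P - 1, by omega, ?_, ?_⟩
  · by_cases ht2 : t = 2
    · subst ht2
      simp at hPmod
      omega
    · have h2t : 2 % t = 2 := Nat.mod_eq_of_lt (by omega)
      obtain ⟨q, r, hc, hrt, hcr⟩ := exists_qr (by omega : 0 < t) P
      rw [hcr, h2t] at hPmod
      have hP1 : P - 1 = q * t + 1 := by omega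
      rw [hP1, modlem _ _ (by omega)]
  · omega

lemma d_dvd_alpha (m : ℕ) : d ∣ alpha d m := by
  cases m with
  | zero => rw [alpha_zero]
  | succ m => rw [alpha_succ]; exact dvd_mul_right d _

include ht in
lemma d_dvd_beta (m : ℕ) : d ∣ beta t d m := by
  cases m with
  | zero => rw [beta_zero]; exact dvd_mul_left d t
  | succ m => rw [beta_succ t d m (by omega)]; exact dvd_mul_right d _

include hd in
lemma alpha_ge (m : ℕ) : d ≤ alpha d m := by
  cases m with
  | zero => rw [alpha_zero]
  | succ m =>
      rw [alpha_succ]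
      calc d = d * 1 := (mul_one d).symm
      _ ≤ d * (1 + alpha d m) := Nat.mul_le_mul_left d (by omega)

include ht in
lemma hh_le (r : ℕ) (h : r < t) : hh t r ≤ t - 1 := by unfold hh; split_ifs <;> omega

include ht in
lemma hh_invol (r : ℕ) (h : r < t) : hh t (hh t r) = r := by
  unfold hh; split_ifs <;> omega

end
lemma sg_char (t d : ℕ) (ht : 2 ≤ t) (hd : 2 ≤ d) (hmod : d % t = 1) : ∀ n : ℕ,
    (n < d → sg t d hd n = n % t) ∧
    (∀ m, alpha d m ≤ n → n ≤ beta t d m → sg t d hd n = bval t d m (n - alpha d m)) ∧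
    (∀ m, beta t d m < n → n < alpha d (m+1) → sg t d hd n = (n - beta t d m - 1) % t) := by
  intro n
  induction n using Nat.strong_induction_on with
  | _ n IH =>
  have hdt' : t + 1 ≤ d := hdt ht hd hmod
  have IH1 : ∀ k, k < n → k < d → sg t d hd k = k % t := fun k hk h => (IH k hk).1 h
  have IH2 : ∀ k, k < n → ∀ m, alpha d m ≤ k → k ≤ beta t d m →
      sg t d hd k = bval t d m (k - alpha d m) := fun k hk => (IH k hk).2.1
  have IH3 : ∀ k, k < n → ∀ m, beta t d m < k → k < alpha d (m+1) →
      sg t d hd k = (k - beta t d m - 1) % t := fun k hk => (IH k hk).2.2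
  refine ⟨?base, ?bcase, ?acase⟩
  case base =>
    intro hn
    rcases Nat.eq_zero_or_pos n with rfl | hn0
    · rw [Nat.zero_mod]
      apply sg_eq_of
      · intro s hs1 hs2; simp at hs2; omega
      · intro h; omega
      · intro k hk; omega
    · have hnodiv : ∀ (h0 : 0 < n), ¬ d ∣ n :=
        fun h0 hdvd => absurd (Nat.le_of_dvd h0 hdvd) (by omega)
      by_cases hnt : n ≤ t - 1
      · rw [Nat.mod_eq_of_lt (by omega)]
        apply sg_eq_of
        · intro s hs1 hs2
          have hs2' : s ≤ n := le_trans hs2 (min_le_right _ _)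
          rw [IH1 (n-s) (by omega) (by omega), Nat.mod_eq_of_lt (by omega)]
          omega
        · intro h0 hdvd; exact absurd hdvd (hnodiv h0)
        · intro k hk
          left
          have hmin : min (t-1) n = n := min_eq_right (by omega)
          refine ⟨n - k, by omega, by omega, ?_⟩
          rw [show n - (n - k) = k by omega, IH1 k (by omega) (by omega),
            Nat.mod_eq_of_lt (by omega)]
      · have hmin : min (t-1) n = t-1 := min_eq_left (by omega)
        obtain ⟨q, r, hqr, hrt, hmr⟩ := exists_qr (show 0<t by omega) n
        rw [hmr]
        apply sg_eq_of
        · intro s hs1 hs2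
          rw [hmin] at hs2
          rw [IH1 (n-s) (by omega) (by omega), hqr, shift_mod ht s hrt (by omega) (by omega)]
          split_ifs <;> first | contradiction | omega
        · intro h0 hdvd; exact absurd hdvd (hnodiv h0)
        · intro k hk
          left
          refine ⟨r - k, by omega, by omega, ?_⟩
          rw [IH1 (n-(r-k)) (by omega) (by omega), hqr,
            shift_mod ht (r-k) hrt (by omega) (by omega)]
          rw [if_pos (by omega)]
          omega
  case bcase =>
    intro m hα hβ
    have hJf := J_facts ht hd hmod m
    obtain ⟨J, hJdef⟩ : ∃ J, J = (t-1) * d^(m+1) := ⟨_, rfl⟩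
    have hJmod : J % t = t - 1 := by rw [hJdef]; exact hJf.1
    have hJge : t + 1 ≤ J := by rw [hJdef]; exact hJf.2
    have hbe : beta t d m = alpha d m + J := by rw [hJdef]; exact beta_eq t d m (by omega)
    obtain ⟨j, hj⟩ : ∃ j, n = alpha d m + j := ⟨n - alpha d m, by omega⟩
    have hjJ : j ≤ J := by omega
    have hαd : d ≤ alpha d m := alpha_ge hd m
    have hmin : min (t-1) n = t-1 := min_eq_left (by omega)
    rw [show n - alpha d m = j by omega]
    obtain ⟨a, hda, ha1⟩ : ∃ a, d = a * t + 1 ∧ 1 ≤ a := by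
      refine ⟨d/t, by rw [← hmod, Nat.div_add_mod' d t], ?_⟩
      rcases Nat.eq_zero_or_pos (d/t) with h0 | h1
      · exfalso
        have := Nat.div_add_mod d t
        rw [h0, hmod] at this
        omega
      · exact h1
    have hAval : ∀ u, 1 ≤ u → u ≤ t-1 → alpha d m - u < n →
        sg t d hd (alpha d m - u) = (if u = 1 then 0 else t + 1 - u) := by
      intro u hu1 hu2 hlt
      rcases Nat.eq_zero_or_pos m with rfl | hm1
      · rw [IH1 _ hlt (by rw [alpha_zero]; omega), alpha_zero, hda]
        rw [shift_mod ht u (by omega) (by omega) (by omega)]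
        split_ifs <;> first | contradiction | omega
      · obtain ⟨m', rfl⟩ : ∃ m', m = m' + 1 := ⟨m-1, by omega⟩
        obtain ⟨g, hg, hg1, hgt⟩ := gapAB ht hd hmod m'
        rw [IH3 _ hlt m' (by omega) (by omega)]
        rw [show alpha d (m'+1) - u - beta t d m' - 1 = g - u by omega]
        obtain ⟨qg, rg, hgq, hrgt, hgr⟩ := exists_qr (by omega : 0 < t) g
        have hrg1 : rg = 1 := by omega
        subst hrg1
        rw [hgq, shift_mod ht u (by omega) (by omega) (by omega)]
        split_ifs <;> first | contradiction | omega
    by_cases hj0 : j = 0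
    · -- n = alpha d m
      have hn_eq : n = alpha d m := by omega
      have hbv : bval t d m 0 = if t = 2 ∧ 1 ≤ m then 1 else t := by simp [bval]
      rw [hj0, hbv]
      have hdvd : d ∣ n := by rw [hn_eq]; exact d_dvd_alpha m
      have hdivval : sg t d hd (n / d) = if t = 2 ∧ 1 ≤ m then 0 else 1 := by
        rcases Nat.eq_zero_or_pos m with rfl | hm1
        · have hq : n / d = 1 := by rw [hn_eq, alpha_zero]; exact Nat.div_self (by omega)
          rw [hq, IH1 1 (by omega) (by omega), Nat.mod_eq_of_lt (by omega), if_neg (by omega)]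
        · obtain ⟨m', rfl⟩ : ∃ m', m = m' + 1 := ⟨m-1, by omega⟩
          have hquot : n / d = 1 + alpha d m' := by
            rw [hn_eq, alpha_succ, Nat.mul_div_cancel_left _ (by omega : 0 < d)]
          have hJ' := J_facts ht hd hmod m'
          have hbe' : beta t d m' = alpha d m' + (t-1)*d^(m'+1) := beta_eq t d m' (by omega)
          have hltn : 1 + alpha d m' < n := by
            rw [← hquot]; exact Nat.div_lt_self (by omega) hd
          rw [hquot, IH2 _ hltn m' (by omega) (by omega)]
          rw [show 1 + alpha d m' - alpha d m' = 1 by omega]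
          have hb1 : bval t d m' 1 = hh t 1 := by
            simp only [bval]
            rw [if_neg (by omega), if_neg (by omega), Nat.mod_eq_of_lt (by omega)]
          rw [hb1]
          simp only [hh]
          split_ifs <;> first | contradiction | omega
      apply sg_eq_of
      · intro s hs1 hs2
        rw [hmin] at hs2
        rw [show n - s = alpha d m - s by omega, hAval s hs1 hs2 (by omega)]
        split_ifs <;> first | contradiction | omega
      · intro h0 _
        rw [hdivval]; split_ifs <;> first | contradiction | omega
      · intro k hk
        by_cases hc : t = 2 ∧ 1 ≤ m
        · rw [if_pos hc] at hk
          left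
          refine ⟨1, le_rfl, by rw [hmin]; omega, ?_⟩
          rw [show n - 1 = alpha d m - 1 by omega,
            hAval 1 le_rfl (by omega) (by omega), if_pos rfl]
          omega
        · rw [if_neg hc] at hk
          rcases eq_or_ne k 1 with rfl | hk1
          · right
            exact ⟨by omega, hdvd, by rw [hdivval, if_neg hc]⟩
          · left
            by_cases hk0 : k = 0
            · refine ⟨1, le_rfl, by rw [hmin]; omega, ?_⟩
              rw [show n - 1 = alpha d m - 1 by omega,
                hAval 1 le_rfl (by omega) (by omega), if_pos rfl, hk0]
            · refine ⟨t+1-k, by omega, by rw [hmin]; omega, ?_⟩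
              rw [show n - (t+1-k) = alpha d m - (t+1-k) by omega,
                hAval _ (by omega) (by omega) (by omega), if_neg (by omega)]
              omega
    · by_cases hjβ : j = J
      · -- n = beta t d m
        have hn_eq : n = beta t d m := by omega
        have hbv : bval t d m J = t := by
          simp only [bval]
          rw [if_neg (by omega), if_pos (by rw [hJdef])]
        rw [hjβ, hbv]
        have hsubval : ∀ s, 1 ≤ s → s ≤ t-1 →
            sg t d hd (n - s) = (if s = t-1 then t-1 else t-1-s) := by
          intro s hs1 hs2
          rw [IH2 _ (by omega) m (by omega) (by omega),
            show n - s - alpha d m = J - s by omega]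
          simp only [bval]
          rw [if_neg (by omega), if_neg (by rw [← hJdef]; omega)]
          obtain ⟨qJ, rJ, hJq, hrJt, hJr⟩ := exists_qr (by omega : 0 < t) J
          have hrJ : rJ = t-1 := by omega
          subst hrJ
          rw [hJq, shift_mod ht s (by omega) (by omega) (by omega), if_pos (by omega)]
          simp only [hh]
          split_ifs <;> first | contradiction | omega
        have hdvd : d ∣ n := hn_eq ▸ d_dvd_beta ht m
        have hdivval : sg t d hd (n/d) = 0 := by
          rcases Nat.eq_zero_or_pos m with rfl | hm1
          · have hq : n / d = t := by
              rw [hn_eq, beta_zero, Nat.mul_div_cancel _ (by omega : 0 < d)]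
            rw [hq, IH1 t (by omega) (by omega), Nat.mod_self]
          · obtain ⟨m', rfl⟩ : ∃ m', m = m'+1 := ⟨m-1, by omega⟩
            have hq : n / d = 1 + beta t d m' := by
              rw [hn_eq, beta_succ t d m' (by omega),
                Nat.mul_div_cancel_left _ (by omega : 0 < d)]
            obtain ⟨g, hg, hg1, hgt⟩ := gapAB ht hd hmod m'
            have hltq : 1 + beta t d m' < n := by
              rw [← hq]; exact Nat.div_lt_self (by omega) hd
            rw [hq, IH3 _ hltq m' (by omega) (by omega),
              show 1 + beta t d m' - beta t d m' - 1 = 0 by omega, Nat.zero_mod]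
        apply sg_eq_of
        · intro s hs1 hs2
          rw [hmin] at hs2
          rw [hsubval s hs1 hs2]
          split_ifs <;> first | contradiction | omega
        · intro _ _
          rw [hdivval]; omega
        · intro k hk
          rcases Nat.eq_zero_or_pos k with rfl | hk0
          · right; exact ⟨by omega, hdvd, hdivval⟩
          · left
            by_cases hkt : k = t-1
            · refine ⟨t-1, by omega, by rw [hmin], ?_⟩
              rw [hsubval (t-1) (by omega) le_rfl, if_pos rfl, hkt]
            · refine ⟨t-1-k, by omega, by rw [hmin]; omega, ?_⟩
              rw [hsubval _ (by omega) (by omega), if_neg (by omega)]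
              omega
      · -- interior of B_m
        have hj1 : 1 ≤ j := by omega
        have hjJ1 : j ≤ J - 1 := by omega
        have hbv : bval t d m j = hh t (j % t) := by
          simp only [bval]
          rw [if_neg hj0, if_neg (by rw [← hJdef]; omega)]
        rw [hbv]
        by_cases hjt : j < t
        · -- small interior
          rw [Nat.mod_eq_of_lt hjt]
          have hnodvd : ¬ d ∣ n := by
            intro hdvd
            have h' : d ∣ n - alpha d m := Nat.dvd_sub hdvd (d_dvd_alpha m)
            rw [show n - alpha d m = j by omega] at h'
            have := Nat.le_of_dvd (by omega) h'
            omega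
          have hsubval : ∀ s, 1 ≤ s → s ≤ t-1 → sg t d hd (n - s) =
              (if s < j then j - s else if s = j then (if t = 2 ∧ 1 ≤ m then 1 else t)
               else if s = j+1 then 0 else t + 1 - (s - j)) := by
            intro s hs1 hs2
            rcases lt_trichotomy s j with h | rfl | h
            · rw [if_pos h, IH2 _ (by omega) m (by omega) (by omega),
                show n - s - alpha d m = j - s by omega]
              simp only [bval]
              rw [if_neg (by omega), if_neg (by rw [← hJdef]; omega),
                Nat.mod_eq_of_lt (by omega)]
              simp only [hh]
              split_ifs <;> first | contradiction | omega
            · rw [if_neg (lt_irrefl s), if_pos rfl,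
                show n - s = alpha d m by omega,
                IH2 _ (by omega) m le_rfl (by omega), Nat.sub_self]
              simp [bval]
            · rw [if_neg (by omega), if_neg (by omega),
                show n - s = alpha d m - (s - j) by omega,
                hAval (s-j) (by omega) (by omega) (by omega)]
              split_ifs <;> first | contradiction | omega
          apply sg_eq_of
          · intro s hs1 hs2
            rw [hmin] at hs2
            rw [hsubval s hs1 hs2]
            simp only [hh]
            split_ifs <;> first | contradiction | omega
          · intro h0 hdvd
            exact absurd hdvd hnodvd
          · intro k hk
            left
            have hv : hh t j = if j = t-1 then 0 else j := by
              simp only [hh]; rw [if_neg hj0]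
            rw [hv] at hk
            by_cases hjt1 : j = t-1
            · rw [if_pos hjt1] at hk; omega
            · rw [if_neg hjt1] at hk
              by_cases hk0 : k = 0
              · refine ⟨j+1, by omega, by rw [hmin]; omega, ?_⟩
                rw [hsubval _ (by omega) (by omega), if_neg (by omega),
                  if_neg (by omega), if_pos rfl, hk0]
              · refine ⟨j - k, by omega, by rw [hmin]; omega, ?_⟩
                rw [hsubval _ (by omega) (by omega), if_pos (by omega)]
                omega
        · -- big interior: t ≤ j
          obtain ⟨qj, r, hjq, hrt, hjr⟩ := exists_qr (by omega : 0 < t) j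
          rw [hjr]
          have hqj1 : 1 ≤ qj := by
            rcases Nat.eq_zero_or_pos qj with rfl | h
            · simp at hjq; omega
            · exact h
          have hsubval : ∀ s, 1 ≤ s → s ≤ t-1 →
              sg t d hd (n - s) = hh t (if s ≤ r then r - s else t + r - s) := by
            intro s hs1 hs2
            rw [IH2 _ (by omega) m (by omega) (by omega),
              show n - s - alpha d m = j - s by omega]
            simp only [bval]
            rw [if_neg (by omega), if_neg (by rw [← hJdef]; omega)]
            rw [hjq, shift_mod ht s hrt (by omega) (by omega)]
          have hdivne : ∀ (h0 : 0 < n) (hdvd : d ∣ n), sg t d hd (n/d) ≠ hh t r := by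
            intro h0 hdvd
            have h' : d ∣ n - alpha d m := Nat.dvd_sub hdvd (d_dvd_alpha m)
            rw [show n - alpha d m = j by omega] at h'
            obtain ⟨j', hj'⟩ := h'
            have hj'1 : 1 ≤ j' := by
              rcases Nat.eq_zero_or_pos j' with rfl | h
              · simp at hj'; omega
              · exact h
            have hrj' : j' % t = r := by
              have he : j = (a*j')*t + j' := by rw [hj', hda]; ring
              have hmodj : j % t = j' % t := by rw [he, modlem2]
              omega
            rcases Nat.eq_zero_or_pos m with rfl | hm1
            · have hJd : J = (t-1)*d := by rw [hJdef, pow_one]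
              have hj'le : j' ≤ t-2 := by
                have h1 : d * j' < d * (t-1) := by
                  rw [← hj']
                  calc j < J := by omega
                  _ = d * (t-1) := by rw [hJd]; ring
                have := Nat.lt_of_mul_lt_mul_left h1
                omega
              have hq : n / d = 1 + j' := by
                have he : n = d * (1 + j') := by rw [hj, alpha_zero, hj']; ring
                rw [he, Nat.mul_div_cancel_left _ (by omega : 0 < d)]
              have hrr : r = j' := by rw [← hrj', Nat.mod_eq_of_lt (by omega)]
              rw [hq, IH1 _ (by omega) (by omega), Nat.mod_eq_of_lt (by omega)]
              simp only [hh]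
              rw [if_neg (by omega), if_neg (by omega)]
              omega
            · obtain ⟨m', rfl⟩ : ∃ m', m = m'+1 := ⟨m-1, by omega⟩
              obtain ⟨J', hJ'def⟩ : ∃ J', J' = (t-1)*d^(m'+1) := ⟨_, rfl⟩
              have hJ'f := J_facts ht hd hmod m'
              have hJ'ge : t+1 ≤ J' := by rw [hJ'def]; exact hJ'f.2
              have hJJ' : J = d * J' := by rw [hJdef, hJ'def]; ring
              have hj'lt : j' < J' := by
                have h1 : d * j' < d * J' := by rw [← hj', ← hJJ']; omega
                exact Nat.lt_of_mul_lt_mul_left h1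
              have hq : n / d = alpha d m' + (1 + j') := by
                have he : n = d * (alpha d m' + (1 + j')) := by
                  rw [hj, alpha_succ, hj']; ring
                rw [he, Nat.mul_div_cancel_left _ (by omega : 0 < d)]
              have hquotlt : alpha d m' + (1+j') < n := by
                rw [← hq]; exact Nat.div_lt_self (by omega) hd
              have hbnd : alpha d m' + (1+j') ≤ beta t d m' := by
                have := beta_eq t d m' (show 1 ≤ t by omega)
                rw [← hJ'def] at this
                omega
              rw [hq, IH2 _ hquotlt m' (by omega) hbnd,
                show alpha d m' + (1+j') - alpha d m' = 1 + j' by omega]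
              simp only [bval]
              rw [if_neg (by omega)]
              by_cases htop : 1 + j' = (t-1)*d^(m'+1)
              · rw [if_pos htop]
                have := hh_le ht r hrt
                omega
              · rw [if_neg htop]
                intro heq
                have h1 : (1+j') % t < t := Nat.mod_lt _ (by omega)
                have h2 := hh_invol ht _ h1
                have h3 := hh_invol ht r hrt
                rw [heq, h3] at h2
                have h4 := succ_mod_ne ht j'
                rw [hrj', Nat.add_comm j' 1] at h4
                exact h4 h2.symm
          apply sg_eq_of
          · intro s hs1 hs2
            rw [hmin] at hs2
            rw [hsubval s hs1 hs2]
            intro heq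
            have hx : (if s ≤ r then r - s else t + r - s) < t := by split_ifs <;> first | contradiction | omega
            have h1 := hh_invol ht _ hx
            have h2 := hh_invol ht r hrt
            rw [heq, h2] at h1
            split_ifs at h1 <;> omega
          · exact hdivne
          · intro k hk
            left
            have hhr := hh_le ht r hrt
            have hkt : k < t := by omega
            have hρt : hh t k < t := by have := hh_le ht k hkt; omega
            have hρr : hh t k ≠ r := by
              intro h
              have := hh_invol ht k hkt
              rw [h] at this
              omega
            by_cases hρlt : hh t k < r
            · refine ⟨r - hh t k, by omega, by rw [hmin]; omega, ?_⟩
              rw [hsubval _ (by omega) (by omega), if_pos (by omega),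
                show r - (r - hh t k) = hh t k by omega]
              exact hh_invol ht k hkt
            · refine ⟨t + r - hh t k, by omega, by rw [hmin]; omega, ?_⟩
              rw [hsubval _ (by omega) (by omega), if_neg (by omega),
                show t + r - (t + r - hh t k) = hh t k by omega]
              exact hh_invol ht k hkt
  case acase =>
    intro m hβn hαn
    obtain ⟨g, hg, hg1, hgt⟩ := gapAB ht hd hmod m
    obtain ⟨k, hk⟩ : ∃ k, n = beta t d m + 1 + k := ⟨n - beta t d m - 1, by omega⟩
    have hkg : k ≤ g - 1 := by omega
    rw [show n - beta t d m - 1 = k by omega]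
    have hJf := J_facts ht hd hmod m
    obtain ⟨J, hJdef⟩ : ∃ J, J = (t-1) * d^(m+1) := ⟨_, rfl⟩
    have hJmod : J % t = t - 1 := by rw [hJdef]; exact hJf.1
    have hJge : t + 1 ≤ J := by rw [hJdef]; exact hJf.2
    have hbe : beta t d m = alpha d m + J := by rw [hJdef]; exact beta_eq t d m (by omega)
    have hαd : d ≤ alpha d m := alpha_ge hd m
    have hmin : min (t-1) n = t-1 := min_eq_left (by omega)
    obtain ⟨a, hda, ha1⟩ : ∃ a, d = a * t + 1 ∧ 1 ≤ a := by
      refine ⟨d/t, by rw [← hmod, Nat.div_add_mod' d t], ?_⟩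
      rcases Nat.eq_zero_or_pos (d/t) with h0 | h1
      · exfalso
        have := Nat.div_add_mod d t
        rw [h0, hmod] at this
        omega
      · exact h1
    obtain ⟨qk, r, hkq, hrt, hkr⟩ := exists_qr (by omega : 0 < t) k
    rw [hkr]
    have hdivne : ∀ (h0 : 0 < n) (hdvd : d ∣ n), sg t d hd (n/d) ≠ r := by
      intro h0 hdvd
      obtain ⟨q', hq'⟩ := hdvd
      have hndiv : n / d = q' := by rw [hq', Nat.mul_div_cancel_left _ (by omega : 0 < d)]
      rcases Nat.eq_zero_or_pos m with rfl | hm1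
      · have hbz : beta t d 0 = t * d := beta_zero t d
        have hctd : t * d = d * t := Nat.mul_comm t d
        have ha1s : alpha d (0+1) = d * (1 + d) := by rw [alpha_succ, alpha_zero]
        have hq'lo : t < q' := by
          have h1 : d * t < d * q' := by omega
          exact Nat.lt_of_mul_lt_mul_left h1
        have hq'hi : q' ≤ d := by
          have h1 : d * q' < d * (1 + d) := by omega
          have := Nat.lt_of_mul_lt_mul_left h1
          omega
        obtain ⟨k', hk'⟩ : ∃ k', q' = t + k' := ⟨q' - t, by omega⟩
        have hk'1 : 1 ≤ k' := by omega
        have hkdk : k + 1 = d * k' := by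
          have h2 : d * q' = d * t + d * k' := by rw [hk']; ring
          omega
        have hkmod : k % t = (k' - 1) % t := by
          have h2 : d * k' = (a*k')*t + k' := by rw [hda]; ring
          have he : k = (a*k')*t + (k' - 1) := by omega
          rw [he, modlem2]
        have hrr : r = (k' - 1) % t := by omega
        have htd2 : d ≤ t * d := Nat.le_mul_of_pos_left d (by omega)
        rcases eq_or_ne q' d with hqa | hne
        · rw [hndiv, hqa, IH2 d (by omega) 0 (alpha_zero d).le
            (by omega), alpha_zero, Nat.sub_self]
          have hb : bval t d 0 0 = t := by simp [bval]
          rw [hb]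
          omega
        · rw [hndiv, IH1 q' (by omega) (by omega)]
          have h3 : q' % t = k' % t := by
            rw [show q' = 1*t + k' by omega, modlem2]
          rw [h3, hrr]
          have h4 := succ_mod_ne ht (k'-1)
          rw [show k'-1+1 = k' by omega] at h4
          exact h4
      · obtain ⟨m', rfl⟩ : ∃ m', m = m'+1 := ⟨m-1, by omega⟩
        have hbsucc : beta t d (m'+1) = d * (1 + beta t d m') := beta_succ t d m' (by omega)
        have hasucc : alpha d (m'+1+1) = d * (1 + alpha d (m'+1)) := alpha_succ d (m'+1)
        have hq'lo : beta t d m' + 2 ≤ q' := by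
          have h1 : d * (1 + beta t d m') < d * q' := by omega
          have := Nat.lt_of_mul_lt_mul_left h1
          omega
        have hq'hi : q' ≤ alpha d (m'+1) := by
          have h1 : d * q' < d * (1 + alpha d (m'+1)) := by omega
          have := Nat.lt_of_mul_lt_mul_left h1
          omega
        have hq'n : q' < n := by omega
        obtain ⟨k', hk'⟩ : ∃ k', q' = beta t d m' + 1 + k' := ⟨q' - beta t d m' - 1, by omega⟩
        have hk'1 : 1 ≤ k' := by omega
        have hkdk : k + 1 = d * k' := by
          have h2 : d * q' = d * (1 + beta t d m') + d * k' := by rw [hk']; ring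
          omega
        have hkmod : k % t = (k' - 1) % t := by
          have h2 : d * k' = (a*k')*t + k' := by rw [hda]; ring
          have he : k = (a*k')*t + (k' - 1) := by omega
          rw [he, modlem2]
        have hrr : r = (k' - 1) % t := by omega
        rcases eq_or_ne q' (alpha d (m'+1)) with hqa | hne
        · obtain ⟨g', hg', hg'1, hg't⟩ := gapAB ht hd hmod m'
          have hk'g : k' = g' := by omega
          rw [hndiv, hqa, IH2 _ (by omega) (m'+1) le_rfl (by omega), Nat.sub_self]
          have hb0 : bval t d (m'+1) 0 = if t = 2 ∧ 1 ≤ m'+1 then 1 else t := by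
            simp [bval]
          obtain ⟨qg, rg, hgq, hrgt, hgr2⟩ := exists_qr (by omega : 0 < t) g'
          have hrg1 : rg = 1 := by omega
          have hk0 : (k' - 1) % t = 0 := by
            rw [show k' - 1 = qg * t + 0 by omega, modlem _ _ (by omega)]
          have hr0 : r = 0 := by omega
          rw [hb0, hr0]
          split_ifs <;> first | contradiction | omega
        · rw [hndiv, IH3 q' hq'n m' (by omega) (by omega),
            show q' - beta t d m' - 1 = k' by omega, hrr]
          have h4 := succ_mod_ne ht (k'-1)
          rw [show k'-1+1 = k' by omega] at h4
          exact h4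
    by_cases hksmall : k ≤ t - 2
    · have hrk : r = k := by
        rw [← hkr, Nat.mod_eq_of_lt (by omega)]
      have hsubval : ∀ s, 1 ≤ s → s ≤ t-1 → sg t d hd (n - s) =
          (if s ≤ k then k - s else if s = k+1 then t else t-1-(s-k-1)) := by
        intro s hs1 hs2
        by_cases h1 : s ≤ k
        · rw [if_pos h1, IH3 _ (by omega) m (by omega) (by omega),
            show n - s - beta t d m - 1 = k - s by omega, Nat.mod_eq_of_lt (by omega)]
        · by_cases h2 : s = k+1
          · rw [if_neg h1, if_pos h2, show n - s = beta t d m by omega,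
              IH2 _ (by omega) m (by omega) le_rfl,
              show beta t d m - alpha d m = J by omega]
            simp only [bval]
            rw [if_neg (by omega), if_pos (by rw [hJdef])]
          · rw [if_neg h1, if_neg h2]
            have hu1 : 1 ≤ s - k - 1 := by omega
            have hu2 : s - k - 1 ≤ t - 2 := by omega
            rw [show n - s = alpha d m + (J - (s-k-1)) by omega,
              IH2 _ (by omega) m (by omega) (by omega),
              show alpha d m + (J - (s-k-1)) - alpha d m = J - (s-k-1) by omega]
            simp only [bval]
            rw [if_neg (by omega), if_neg (by rw [← hJdef]; omega)]
            obtain ⟨qJ, rJ, hJq, hrJt, hJr⟩ := exists_qr (by omega : 0 < t) J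
            have hrJ : rJ = t-1 := by omega
            subst hrJ
            rw [hJq, shift_mod ht (s-k-1) (by omega) (by omega) (by omega),
              if_pos (by omega)]
            unfold hh
            split_ifs <;> first | contradiction | omega
      apply sg_eq_of
      · intro s hs1 hs2
        rw [hmin] at hs2
        rw [hsubval s hs1 hs2]
        split_ifs <;> first | contradiction | omega
      · exact hdivne
      · intro k2 hk2
        left
        refine ⟨k - k2, by omega, by rw [hmin]; omega, ?_⟩
        rw [hsubval _ (by omega) (by omega), if_pos (by omega)]
        omega
    · have hsubval : ∀ s, 1 ≤ s → s ≤ t-1 → sg t d hd (n - s) =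
          (if s ≤ r then r - s else t + r - s) := by
        intro s hs1 hs2
        rw [IH3 _ (by omega) m (by omega) (by omega),
          show n - s - beta t d m - 1 = k - s by omega, hkq,
          shift_mod ht s hrt (by omega) (by omega)]
      apply sg_eq_of
      · intro s hs1 hs2
        rw [hmin] at hs2
        rw [hsubval s hs1 hs2]
        split_ifs <;> first | contradiction | omega
      · exact hdivne
      · intro k2 hk2
        left
        refine ⟨r - k2, by omega, by rw [hmin]; omega, ?_⟩
        rw [hsubval _ (by omega) (by omega), if_pos (by omega)]
        omega

theorem sg_Am (t d : ℕ) (ht : 2 ≤ t) (hd : 2 ≤ d) (hmod : d % t = 1)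
    (m : ℕ) (hm : 1 ≤ m) (n : ℕ)
    (h1 : beta t d (m - 1) < n) (h2 : n < alpha d m) :
    sg t d hd n = (n - beta t d (m - 1) - 1) % t := by
  obtain ⟨m', rfl⟩ : ∃ m', m = m' + 1 := ⟨m - 1, by omega⟩
  have hms : m' + 1 - 1 = m' := by omega
  rw [hms] at h1 ⊢
  exact (sg_char t d ht hd hmod n).2.2 m' h1 h2
end
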